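/- Consider the birth-and-death chain with parameters L ≥ 1 and α ∈ (0,1]. Then for every 1 ≤ i ≤ L−1 and every t ≥ 0, one has P^t(0,i) = P^t(L,L−i) and P^t(0,i) ≤ 2α. -/

import Mathlib

/-!
The reflection `i ↦ L - i` maps the chain to itself, which gives the symmetry. For the bound,
induct on `t`: an interior state `j` is entered only from `j - 1` and `j + 1`, either from a
boundary state (mass at most `1`) with probability `α`, or from an interior state (mass at most
`2α` by induction) with probability `1/2`; each side contributes at most `α`.
-/

open MeasureTheory Filter Topology

/-- Transition probabilities of the birth-and-death chain on `{0,…,L}` with parameter `α`: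
`P(0,1) = P(L,L−1) = α`, `P(0,0) = P(L,L) = 1−α`, and `P(i,i+1) = P(i,i−1) = 1/2` for
`0 < i < L`. -/
noncomputable def bdKernel (L : ℕ) (α : ℝ) (i j : ℕ) : ℝ :=
  if i = 0 then (if j = 1 then α else if j = 0 then 1 - α else 0)
  else if i = L then (if j = L - 1 then α else if j = L then 1 - α else 0)
  else if i < L then (if j = i + 1 ∨ j = i - 1 then 1 / 2 else 0)
  else 0

/-- `bdDist L α x t j = P^t(x, j)`, the probability that the birth-and-death chain started at
`x` is at state `j` at time `t`. -/
noncomputable def bdDist (L : ℕ) (α : ℝ) (x : ℕ) : ℕ → ℕ → ℝ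
  | 0 => fun j => if j = x then 1 else 0
  | t + 1 => fun j => ∑ i ∈ Finset.range (L + 1), bdDist L α x t i * bdKernel L α i j

/-- Total variation distance between two distributions on the state space `{0,…,L}`. -/
noncomputable def bdTV (L : ℕ) (μ ν : ℕ → ℝ) : ℝ :=
  ⨆ A : Set ℕ,
    |∑ i ∈ Finset.range (L + 1), Set.indicator A μ i -
      ∑ i ∈ Finset.range (L + 1), Set.indicator A ν i|

open Classical in
/-- `bdStay L α T x A = P(X_t ∈ A_t for all 0 ≤ t ≤ T | X_0 = x)` for the birth-and-death
chain with parameters `L` and `α`. -/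
noncomputable def bdStay (L : ℕ) (α : ℝ) (T : ℕ) (x : ℕ) (A : ℕ → Set ℕ) : ℝ :=
  ∑ p : Fin (T + 1) → Fin (L + 1),
    if (p 0 : ℕ) = x ∧ ∀ t : Fin (T + 1), (p t : ℕ) ∈ A (t : ℕ) then
      ∏ i : Fin T, bdKernel L α (p i.castSucc) (p i.succ) else 0

/-- The separation `S^A_T(0,L)` of a separating sequence `A` for the birth-and-death chain. -/
noncomputable def bdSep (L : ℕ) (α : ℝ) (T : ℕ) (A : ℕ → Set ℕ) : ℝ :=
  bdStay L α T 0 A + bdStay L α T L (fun t => (A t)ᶜ)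

lemma bdKernel_nonneg (L : ℕ) {α : ℝ} (h0 : 0 ≤ α) (h1 : α ≤ 1) (i j : ℕ) :
    0 ≤ bdKernel L α i j := by
  unfold bdKernel; split_ifs <;> linarith

lemma bdKernel_reflect (L : ℕ) (α : ℝ) {i j : ℕ} (hi : i ≤ L) (hj : j ≤ L) :
    bdKernel L α (L - i) (L - j) = bdKernel L α i j := by
  unfold bdKernel
  split_ifs <;> first | rfl | omega

lemma bdKernel_eq_two_point (L : ℕ) (hL : 1 ≤ L) (α : ℝ) {i : ℕ} (hi : i ≤ L) :
    ∃ u < L + 1, ∃ v < L + 1, ∃ a : ℝ,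
      ∀ j, bdKernel L α i j = (if j = u then a else 0) + (if j = v then 1 - a else 0) := by
  unfold bdKernel
  rcases Nat.eq_zero_or_pos i with rfl | hi0
  · refine ⟨1, by omega, 0, by omega, α, fun j => ?_⟩
    split_ifs <;> first | omega | simp
  rcases hi.eq_or_lt with rfl | hiL
  · refine ⟨i - 1, by omega, i, by omega, α, fun j => ?_⟩
    split_ifs <;> first | omega | simp
  · refine ⟨i + 1, by omega, i - 1, by omega, 1 / 2, fun j => ?_⟩
    split_ifs <;> first | omega | norm_num

lemma bdKernel_sum_eq_one (L : ℕ) (hL : 1 ≤ L) (α : ℝ) {i : ℕ} (hi : i ≤ L) :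
    ∑ j ∈ Finset.range (L + 1), bdKernel L α i j = 1 := by
  obtain ⟨u, hu, v, hv, a, hK⟩ := bdKernel_eq_two_point L hL α hi
  simp only [hK, Finset.sum_add_distrib, Finset.sum_ite_eq', Finset.mem_range, hu, hv, if_true]
  ring

lemma bdDist_succ (L : ℕ) (α : ℝ) (x t j : ℕ) :
    bdDist L α x (t + 1) j = ∑ i ∈ Finset.range (L + 1), bdDist L α x t i * bdKernel L α i j :=
  rfl

lemma bdDist_nonneg (L : ℕ) {α : ℝ} (h0 : 0 ≤ α) (h1 : α ≤ 1) (x t j : ℕ) :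
    0 ≤ bdDist L α x t j := by
  induction t generalizing j with
  | zero => simp only [bdDist]; split_ifs <;> norm_num
  | succ t ih =>
    rw [bdDist_succ]
    exact Finset.sum_nonneg fun i _ => mul_nonneg (ih i) (bdKernel_nonneg L h0 h1 i j)

lemma bdDist_sum_eq_one (L : ℕ) (hL : 1 ≤ L) (α : ℝ) {x : ℕ} (hx : x ≤ L) (t : ℕ) :
    ∑ j ∈ Finset.range (L + 1), bdDist L α x t j = 1 := by
  induction t with
  | zero => simp [bdDist, Nat.lt_succ_of_le hx]
  | succ t ih =>
    simp_rw [bdDist_succ]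
    rw [Finset.sum_comm, ← ih]
    refine Finset.sum_congr rfl fun i hi => ?_
    rw [← Finset.mul_sum, bdKernel_sum_eq_one L hL α (Nat.le_of_lt_succ (Finset.mem_range.mp hi)),
      mul_one]

lemma bdDist_le_one (L : ℕ) (hL : 1 ≤ L) {α : ℝ} (h0 : 0 ≤ α) (h1 : α ≤ 1) {x : ℕ}
    (hx : x ≤ L) (t : ℕ) {j : ℕ} (hj : j ≤ L) : bdDist L α x t j ≤ 1 := by
  rw [← bdDist_sum_eq_one L hL α hx t]
  exact Finset.single_le_sum (fun i _ => bdDist_nonneg L h0 h1 x t i)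
    (Finset.mem_range.mpr (Nat.lt_succ_of_le hj))

lemma bdDist_reflect (L : ℕ) (α : ℝ) {x : ℕ} (hx : x ≤ L) (t : ℕ) {j : ℕ} (hj : j ≤ L) :
    bdDist L α (L - x) t (L - j) = bdDist L α x t j := by
  induction t generalizing j with
  | zero =>
    simp only [bdDist]
    congr 1
    exact propext ⟨fun h => by omega, fun h => by omega⟩
  | succ t ih =>
    rw [bdDist_succ, bdDist_succ, ← Finset.sum_range_reflect]
    refine Finset.sum_congr rfl fun i hi => ?_
    have hiL : i ≤ L := Nat.le_of_lt_succ (Finset.mem_range.mp hi)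
    rw [Nat.add_sub_cancel, ih hiL, bdKernel_reflect L α hiL hj]

lemma bdKernel_step_le (L : ℕ) {α : ℝ} (h0 : 0 ≤ α) (μ : ℕ → ℝ)
    (hμ0 : ∀ k, 0 ≤ μ k) (hμ1 : ∀ k ≤ L, μ k ≤ 1)
    (hμα : ∀ k, 1 ≤ k → k + 1 ≤ L → μ k ≤ 2 * α) {j : ℕ} (hj1 : 1 ≤ j) (hj2 : j + 1 ≤ L) :
    ∑ k ∈ Finset.range (L + 1), μ k * bdKernel L α k j ≤ 2 * α := by
  have hle : ∀ k ∈ Finset.range (L + 1),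
      μ k * bdKernel L α k j ≤ (if k = j - 1 then α else 0) + (if k = j + 1 then α else 0) := by
    intro k hk
    have hkL := Finset.mem_range.mp hk
    have := hμ0 k
    have := hμ1 k (by omega)
    unfold bdKernel
    split_ifs <;> first | omega | nlinarith | nlinarith [hμα k (by omega) (by omega)]
  calc ∑ k ∈ Finset.range (L + 1), μ k * bdKernel L α k j
      ≤ ∑ k ∈ Finset.range (L + 1),
          ((if k = j - 1 then α else 0) + (if k = j + 1 then α else 0)) := Finset.sum_le_sum hle
    _ = 2 * α := by
      simp only [Finset.sum_add_distrib, Finset.sum_ite_eq', Finset.mem_range,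
        show j - 1 < L + 1 by omega, show j + 1 < L + 1 by omega, if_true]
      ring

lemma bdDist_zero_le (L : ℕ) {α : ℝ} (h0 : 0 ≤ α) (h1 : α ≤ 1) (t : ℕ) {j : ℕ}
    (hj1 : 1 ≤ j) (hj2 : j + 1 ≤ L) : bdDist L α 0 t j ≤ 2 * α := by
  induction t generalizing j with
  | zero => simp only [bdDist, if_neg (show j ≠ 0 by omega)]; linarith
  | succ t ih =>
    rw [bdDist_succ]
    exact bdKernel_step_le L h0 _ (bdDist_nonneg L h0 h1 0 t)
      (fun k hk => bdDist_le_one L (by omega) h0 h1 (Nat.zero_le L) t hk)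
      (fun k hk1 hk2 => ih hk1 hk2) hj1 hj2

theorem bdDist_interior_le_general (L : ℕ) (α : ℝ) (hα : α ∈ Set.Ioc (0 : ℝ) 1)
    (i : ℕ) (hi1 : 1 ≤ i) (hi2 : i ≤ L - 1) (t : ℕ) :
    bdDist L α 0 t i = bdDist L α L t (L - i) ∧ bdDist L α 0 t i ≤ 2 * α := by
  obtain ⟨h0, h1⟩ := hα
  refine ⟨?_, bdDist_zero_le L h0.le h1 t hi1 (by omega)⟩
  simpa using (bdDist_reflect L α (Nat.zero_le L) t (j := i) (by omega)).symm

/-- Part (a) of the key lemma: for `1 ≤ i ≤ L−1` and all `t ≥ 0`,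
`P^t(0,i) = P^t(L,L−i)` and `P^t(0,i) ≤ 2α`. -/
theorem bdDist_interior_le (L : ℕ) (hL : 1 ≤ L) (α : ℝ) (hα : α ∈ Set.Ioc (0 : ℝ) 1)
    (i : ℕ) (hi1 : 1 ≤ i) (hi2 : i ≤ L - 1) (t : ℕ) :
    bdDist L α 0 t i = bdDist L α L t (L - i) ∧ bdDist L α 0 t i ≤ 2 * α :=
  bdDist_interior_le_general L α hα i hi1 hi2 t
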